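/- arXiv:2012.07327 — 5 statements merged into one kernel-verified Lean document; each statement's English description precedes it below -/
import Mathlib

section
/- Let M be a metric space, F ⊆ M a closed set, and 𝒜 a family of subsets of M such that for every A ∈ 𝒜 the closure of A intersects F and (closure A) \ A ⊆ F. If for every ε > 0 the set {A ∈ 𝒜 : diam(A) ≥ ε} is finite, then the set F ∪ ⋃𝒜 is closed in M. -/
/-!
Near a point `x ∉ F`, every `A ∈ 𝒜` meeting a small ball around `x` must stretch from that
ball to `F` (its closure meets `F`), so its diameter is bounded below; hence only finitely many
members of `𝒜` come close to `x`. A point of the closure of `F ∪ ⋃₀ 𝒜` outside `F` is then in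
the closure of one of these finitely many `A`, and `closure A \ A ⊆ F` puts it in `A`.
-/

open Set Filter Topology Metric
open scoped ENNReal

theorem isClosed_union_sUnion_of_finite_nhds {X : Type*} [TopologicalSpace X] {F : Set X}
    {𝒜 : Set (Set X)} (hF : IsClosed F) (hbd : ∀ A ∈ 𝒜, closure A \ A ⊆ F)
    (hloc : ∀ x ∉ F, ∃ U ∈ 𝓝 x, {A ∈ 𝒜 | (A ∩ U).Nonempty}.Finite) :
    IsClosed (F ∪ ⋃₀ 𝒜) := by
  refine closure_subset_iff_isClosed.1 fun x hx => ?_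
  by_cases hxF : x ∈ F
  · exact Or.inl hxF
  obtain ⟨U, hU, hfin⟩ := hloc x hxF
  have hx_near : x ∈ closure (⋃₀ {A ∈ 𝒜 | (A ∩ U).Nonempty}) := by
    refine mem_closure_iff_nhds.2 fun t ht => ?_
    obtain ⟨y, ⟨⟨hyt, hyU⟩, hyF⟩, hy⟩ :=
      mem_closure_iff_nhds.1 hx _ (inter_mem (inter_mem ht hU) (hF.isOpen_compl.mem_nhds hxF))
    obtain ⟨A, hA, hyA⟩ := hy.resolve_left hyF
    exact ⟨y, hyt, A, ⟨hA, y, hyA, hyU⟩, hyA⟩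
  obtain ⟨A, ⟨hA, -⟩, hxA⟩ := mem_iUnion₂.1 (hfin.closure_sUnion ▸ hx_near)
  by_contra hx_not
  exact hxF (hbd A hA ⟨hxA, fun h => hx_not (Or.inr ⟨A, hA, h⟩)⟩)

theorem le_ediam_of_inter_eball_nonempty {α : Type*} [PseudoEMetricSpace α] {x : α}
    {r : ℝ≥0∞} {A F : Set α} (hF : Disjoint (eball x (2 * r)) F)
    (hAF : (closure A ∩ F).Nonempty) (hAx : (A ∩ eball x r).Nonempty) : r ≤ ediam A := by
  obtain ⟨y, hyA, hyx⟩ := hAx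
  obtain ⟨z, hzA, hzF⟩ := hAF
  have hxz : 2 * r ≤ edist x z :=
    not_lt.1 fun h => disjoint_left.1 hF (mem_eball'.2 h) hzF
  have hyz : r ≤ edist y z := by
    by_contra! h
    have : edist x z < 2 * r := calc
      edist x z ≤ edist x y + edist y z := edist_triangle _ _ _
      _ < r + r := ENNReal.add_lt_add (mem_eball'.1 hyx) h
      _ = 2 * r := (two_mul r).symm
    exact this.not_ge hxz
  calc r ≤ edist y z := hyz
    _ ≤ ediam (closure A) := edist_le_ediam_of_mem (subset_closure hyA) hzA
    _ = ediam A := ediam_closure A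

theorem stmt_2 {M : Type*} [MetricSpace M] (F : Set M) (hF : IsClosed F)
    (𝒜 : Set (Set M))
    (hmeet : ∀ A ∈ 𝒜, (closure A ∩ F).Nonempty)
    (hbd : ∀ A ∈ 𝒜, closure A \ A ⊆ F)
    (hfin : ∀ ε : ℝ≥0∞, 0 < ε → {A ∈ 𝒜 | ε ≤ EMetric.diam A}.Finite) :
    IsClosed (F ∪ ⋃₀ 𝒜) := by
  refine isClosed_union_sUnion_of_finite_nhds hF hbd fun x hxF => ?_
  obtain ⟨ε, hε, hball⟩ := EMetric.mem_nhds_iff.1 (hF.isOpen_compl.mem_nhds hxF)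
  have hr : 0 < ε / 2 := ENNReal.half_pos hε.ne'
  have hdisj : Disjoint (eball x (2 * (ε / 2))) F := by
    rw [two_mul, ENNReal.add_halves]
    exact subset_compl_iff_disjoint_right.1 hball
  exact ⟨eball x (ε / 2), eball_mem_nhds x hr, (hfin _ hr).subset fun A ⟨hA, hAx⟩ =>
    ⟨hA, le_ediam_of_inter_eball_nonempty hdisj (hmeet A hA) hAx⟩⟩
end

section
/- Let X be a Polish space. Then the mapping from 𝒦(X) to 𝒦(X) given by K ↦ frontier(K) is Borel measurable. -/
open Set

/-- The hyperspace `𝒦(X)` of compact subsets of `X`. -/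
def Hyper (X : Type*) [TopologicalSpace X] := {K : Set X // IsCompact K}

namespace Hyper
variable {X : Type*} [TopologicalSpace X]

/-- The underlying set of a member of the hyperspace. -/
def carrier (K : Hyper X) : Set X := Subtype.val K

/-- The Vietoris topology on `𝒦(X)`. -/
instance : TopologicalSpace (Hyper X) :=
  TopologicalSpace.generateFrom
    ({S | ∃ U : Set X, IsOpen U ∧ S = {K : Hyper X | K.carrier ⊆ U}} ∪
     {S | ∃ U : Set X, IsOpen U ∧ S = {K : Hyper X | (K.carrier ∩ U).Nonempty}})

/-- The Borel σ-algebra of the Vietoris topology. -/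
instance : MeasurableSpace (Hyper X) := borel _

end Hyper

/-!
Since `X` is second countable, so is `𝒦(X)`, and measurability of `K ↦ ∂K` only has to be
tested on the subbasic sets `{K | ∂K ⊆ U}` and `{K | ∂K ∩ U ≠ ∅}`. Open sets of a metric
space are countable unions of closed ones, so everything reduces to `{K | ∂K ∩ C ≠ ∅}` with
`C` closed. For compact `K` we have `∂K ∩ C = (K ∩ C) ∩ closure Kᶜ`, and as `K ∩ C` is compact
this set is nonempty iff for every `n` some `x ∈ K ∩ C` and `y ∉ K` satisfy `d(x, y) < 1/n`.
That condition is a countable union, over basic open sets `b₁, b₂` with `d < 1/n` on `b₁ × b₂`,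
of the Borel sets `{K | K ∩ C ∩ b₁ ≠ ∅} ∖ {K | b₂ ⊆ K}`; the second one is a countable
intersection of closed sets `{K | x ∈ K}` over a countable dense subset of `b₂`.
-/

open TopologicalSpace ENNReal

theorem measurableSet_setOf_inter_nonempty_of_isOpen {X α : Type*} [PseudoEMetricSpace X]
    [MeasurableSpace α] {f : α → Set X}
    (hf : ∀ C, IsClosed C → MeasurableSet {a | (f a ∩ C).Nonempty}) {U : Set X}
    (hU : IsOpen U) :
    MeasurableSet {a | (f a ∩ U).Nonempty} := by
  obtain ⟨F, hF, -, rfl, -⟩ := hU.exists_iUnion_isClosed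
  simp only [inter_iUnion, nonempty_iUnion, ofPred_exists]
  exact .iUnion fun n => hf _ (hF n)

theorem IsCompact.inter_closure_nonempty_iff {X : Type*} [PseudoEMetricSpace X] {s t : Set X}
    (hs : IsCompact s) :
    (s ∩ closure t).Nonempty ↔
      ∀ n : ℕ, (s ×ˢ t ∩ {p | edist p.1 p.2 < (n : ℝ≥0∞)⁻¹}).Nonempty := by
  constructor
  · rintro ⟨x, hxs, hxt⟩ n
    obtain ⟨y, hyt, hxy⟩ :=
      EMetric.mem_closure_iff.1 hxt _ (ENNReal.inv_pos.2 (natCast_ne_top n))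
    exact ⟨(x, y), ⟨hxs, hyt⟩, hxy⟩
  · intro h
    by_contra hst
    obtain ⟨r, hr, hsep⟩ := Metric.exists_pos_forall_lt_edist hs isClosed_closure
      (disjoint_iff_inter_eq_empty.2 (not_nonempty_iff_eq_empty.1 hst))
    obtain ⟨n, hn⟩ := exists_inv_nat_lt (coe_pos.2 hr).ne'
    obtain ⟨⟨x, y⟩, ⟨hxs, hyt⟩, hxy⟩ := h n
    exact (hsep x hxs y (subset_closure hyt)).not_gt (hxy.trans hn)

theorem TopologicalSpace.IsTopologicalBasis.exists_finite_subset_sUnion_between {X : Type*}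
    [TopologicalSpace X] {B : Set (Set X)} (hB : IsTopologicalBasis B) {K U : Set X}
    (hK : IsCompact K) (hU : IsOpen U) (hKU : K ⊆ U) :
    ∃ F ⊆ B, F.Finite ∧ K ⊆ ⋃₀ F ∧ ⋃₀ F ⊆ U := by
  have hcover : K ⊆ ⋃ s ∈ {s ∈ B | s ⊆ U}, s := by
    rw [← sUnion_eq_biUnion, ← hB.open_eq_sUnion' hU]
    exact hKU
  obtain ⟨F, hFB, hF, hKF⟩ := hK.elim_finite_subcover_image
    (fun s hs => hB.isOpen hs.1) hcover
  exact ⟨F, fun s hs => (hFB hs).1, hF, sUnion_eq_biUnion ▸ hKF,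
    sUnion_subset fun s hs => (hFB hs).2⟩

namespace Hyper

section Topology

variable {X : Type*} [TopologicalSpace X]

theorem isCompact_carrier (K : Hyper X) : IsCompact K.carrier := K.2

theorem isOpen_setOf_subset {U : Set X} (hU : IsOpen U) :
    IsOpen {K : Hyper X | K.carrier ⊆ U} :=
  isOpen_generateFrom_of_mem (Or.inl ⟨U, hU, rfl⟩)

theorem isOpen_setOf_inter_nonempty {U : Set X} (hU : IsOpen U) :
    IsOpen {K : Hyper X | (K.carrier ∩ U).Nonempty} :=
  isOpen_generateFrom_of_mem (Or.inr ⟨U, hU, rfl⟩)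

theorem isClosed_setOf_inter_nonempty {F : Set X} (hF : IsClosed F) :
    IsClosed {K : Hyper X | (K.carrier ∩ F).Nonempty} := by
  simp only [← isOpen_compl_iff, compl_ofPred, not_nonempty_iff_eq_empty,
    ← disjoint_iff_inter_eq_empty, ← subset_compl_iff_disjoint_right]
  exact isOpen_setOf_subset hF.isOpen_compl

def vietorisSubbasis (𝒰 : Set (Set X)) : Set (Set (Hyper X)) :=
  (fun U => {K : Hyper X | K.carrier ⊆ U}) '' 𝒰 ∪
    (fun U => {K : Hyper X | (K.carrier ∩ U).Nonempty}) '' 𝒰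

theorem topology_eq_generateFrom_vietorisSubbasis {𝒰 : Set (Set X)} (h𝒰 : ∀ V ∈ 𝒰, IsOpen V)
    (hbetween : ∀ K U, IsCompact K → IsOpen U → K ⊆ U → ∃ V ∈ 𝒰, K ⊆ V ∧ V ⊆ U) :
    (inferInstance : TopologicalSpace (Hyper X)) = generateFrom (vietorisSubbasis 𝒰) := by
  apply le_antisymm
  · refine le_generateFrom ?_
    rintro _ (⟨V, hV, rfl⟩ | ⟨V, hV, rfl⟩)
    exacts [isOpen_setOf_subset (h𝒰 V hV), isOpen_setOf_inter_nonempty (h𝒰 V hV)]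
  · refine le_generateFrom ?_
    rintro _ (⟨U, hU, rfl⟩ | ⟨U, hU, rfl⟩)
    · have hunion : {K : Hyper X | K.carrier ⊆ U} =
          ⋃ V ∈ {V ∈ 𝒰 | V ⊆ U}, {K : Hyper X | K.carrier ⊆ V} := by
        ext K
        simp only [mem_ofPred_eq, mem_iUnion, exists_prop]
        constructor
        · intro hKU
          obtain ⟨V, hV, hKV, hVU⟩ := hbetween _ _ K.isCompact_carrier hU hKU
          exact ⟨V, ⟨hV, hVU⟩, hKV⟩
        · rintro ⟨V, ⟨-, hVU⟩, hKV⟩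
          exact hKV.trans hVU
      rw [hunion]
      exact @isOpen_biUnion _ _ (generateFrom _) _ _ fun V hV =>
        isOpen_generateFrom_of_mem (Or.inl ⟨V, hV.1, rfl⟩)
    · have hunion : {K : Hyper X | (K.carrier ∩ U).Nonempty} =
          ⋃ V ∈ {V ∈ 𝒰 | V ⊆ U}, {K : Hyper X | (K.carrier ∩ V).Nonempty} := by
        ext K
        simp only [mem_ofPred_eq, mem_iUnion, exists_prop]
        constructor
        · rintro ⟨x, hxK, hxU⟩
          obtain ⟨V, hV, hxV, hVU⟩ := hbetween {x} U isCompact_singleton hU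
            (singleton_subset_iff.2 hxU)
          exact ⟨V, ⟨hV, hVU⟩, x, hxK, hxV rfl⟩
        · rintro ⟨V, ⟨-, hVU⟩, hKV⟩
          exact hKV.mono (inter_subset_inter_right _ hVU)
      rw [hunion]
      exact @isOpen_biUnion _ _ (generateFrom _) _ _ fun V hV =>
        isOpen_generateFrom_of_mem (Or.inr ⟨V, hV.1, rfl⟩)

instance [SecondCountableTopology X] : SecondCountableTopology (Hyper X) := by
  have hcount : (sUnion '' {F | F.Finite ∧ F ⊆ countableBasis X}).Countable :=
    (countable_ofPred_finite_subset (countable_countableBasis X)).image _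
  refine ⟨⟨_, (hcount.image _).union (hcount.image _),
    topology_eq_generateFrom_vietorisSubbasis ?_ ?_⟩⟩
  · rintro _ ⟨F, ⟨-, hF⟩, rfl⟩
    exact isOpen_sUnion fun s hs => isOpen_of_mem_countableBasis (hF hs)
  · intro K U hK hU hKU
    obtain ⟨F, hFB, hF, hKF, hFU⟩ :=
      (isBasis_countableBasis X).exists_finite_subset_sUnion_between hK hU hKU
    exact ⟨_, ⟨F, ⟨hF, hFB⟩, rfl⟩, hKF, hFU⟩

instance : BorelSpace (Hyper X) := ⟨rfl⟩

theorem measurableSet_setOf_supset [T2Space X] [SecondCountableTopology X] (V : Set X) :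
    MeasurableSet {K : Hyper X | V ⊆ K.carrier} := by
  obtain ⟨D, hD, hDV⟩ := exists_countable_dense V
  have hset : {K : Hyper X | V ⊆ K.carrier} =
      ⋂ x ∈ Subtype.val '' D, {K : Hyper X | (K.carrier ∩ {x}).Nonempty} := by
    ext K
    simp only [mem_ofPred_eq, mem_iInter, inter_singleton_nonempty]
    exact ⟨fun hVK x hx => hVK (Subtype.coe_image_subset V D hx),
      fun h => (Subtype.dense_iff.1 hDV).trans
        (K.isCompact_carrier.isClosed.closure_subset_iff.2 h)⟩
  rw [hset]
  exact .biInter (hD.image _) fun x _ =>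
    (isClosed_setOf_inter_nonempty isClosed_singleton).measurableSet

theorem measurable_of_measurableSet_setOf [SecondCountableTopology X] {α : Type*}
    [MeasurableSpace α] {f : α → Hyper X}
    (hsubset : ∀ U, IsOpen U → MeasurableSet {a | (f a).carrier ⊆ U})
    (hinter : ∀ U, IsOpen U → MeasurableSet {a | ((f a).carrier ∩ U).Nonempty}) :
    Measurable f := by
  refine (measurable_generateFrom ?_).mono le_rfl (borel_eq_generateFrom_of_subbasis rfl).le
  rintro _ (⟨U, hU, rfl⟩ | ⟨U, hU, rfl⟩)
  exacts [hsubset U hU, hinter U hU]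

end Topology

section EMetric

variable {X : Type*} [EMetricSpace X] [SecondCountableTopology X]

theorem measurableSet_setOf_prod_compl_inter_nonempty {C : Set X} {R : Set (X × X)}
    (hC : IsClosed C) (hR : IsOpen R) :
    MeasurableSet {K : Hyper X | ((K.carrier ∩ C) ×ˢ K.carrierᶜ ∩ R).Nonempty} := by
  set B := countableBasis X
  have hB : IsTopologicalBasis B := isBasis_countableBasis X
  set P := {p : Set X × Set X | p.1 ∈ B ∧ p.2 ∈ B ∧ p.1 ×ˢ p.2 ⊆ R}
  have hP : P.Countable := ((countable_countableBasis X).prod (countable_countableBasis X)).mono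
    fun _ hp => mem_prod.2 ⟨hp.1, hp.2.1⟩
  have hset : {K : Hyper X | ((K.carrier ∩ C) ×ˢ K.carrierᶜ ∩ R).Nonempty} =
      ⋃ p ∈ P, {K : Hyper X | (K.carrier ∩ C ∩ p.1).Nonempty} ∩
        {K : Hyper X | p.2 ⊆ K.carrier}ᶜ := by
    ext K
    simp only [mem_ofPred_eq, mem_iUnion, mem_inter_iff, mem_compl_iff, exists_prop]
    constructor
    · rintro ⟨⟨x, y⟩, ⟨hxKC, hyK⟩, hxy⟩
      obtain ⟨u, v, hu, hv, hxu, hyv, huv⟩ := isOpen_prod_iff.1 hR x y hxy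
      obtain ⟨b₁, hb₁, hxb₁, hb₁u⟩ := hB.exists_subset_of_mem_open hxu hu
      obtain ⟨b₂, hb₂, hyb₂, hb₂v⟩ := hB.exists_subset_of_mem_open hyv hv
      exact ⟨(b₁, b₂), ⟨hb₁, hb₂, (prod_mono hb₁u hb₂v).trans huv⟩, ⟨x, hxKC, hxb₁⟩,
        fun hb₂K => hyK (hb₂K hyb₂)⟩
    · rintro ⟨p, ⟨-, -, hpR⟩, ⟨x, hxKC, hxp⟩, hpK⟩
      obtain ⟨y, hyp, hyK⟩ := not_subset.1 hpK
      exact ⟨(x, y), ⟨hxKC, hyK⟩, hpR ⟨hxp, hyp⟩⟩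
  rw [hset]
  refine .biUnion hP fun p hp => .inter ?_ (measurableSet_setOf_supset p.2).compl
  refine measurableSet_setOf_inter_nonempty_of_isOpen (fun F hF => ?_)
    (hB.isOpen hp.1)
  simpa only [inter_assoc] using (isClosed_setOf_inter_nonempty (hC.inter hF)).measurableSet

theorem measurableSet_setOf_frontier_inter_nonempty_of_isClosed {C : Set X} (hC : IsClosed C) :
    MeasurableSet {K : Hyper X | (frontier K.carrier ∩ C).Nonempty} := by
  have hset : {K : Hyper X | (frontier K.carrier ∩ C).Nonempty} = ⋂ n : ℕ,
      {K : Hyper X | ((K.carrier ∩ C) ×ˢ K.carrierᶜ ∩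
        {p | edist p.1 p.2 < (n : ℝ≥0∞)⁻¹}).Nonempty} := by
    ext K
    rw [mem_ofPred_eq, mem_iInter, frontier_eq_closure_inter_closure,
      K.isCompact_carrier.isClosed.closure_eq, inter_right_comm]
    exact (K.isCompact_carrier.inter_right hC).inter_closure_nonempty_iff
  rw [hset]
  exact .iInter fun n => measurableSet_setOf_prod_compl_inter_nonempty hC
    (isOpen_lt continuous_edist continuous_const)

theorem measurableSet_setOf_frontier_inter_nonempty {U : Set X} (hU : IsOpen U) :
    MeasurableSet {K : Hyper X | (frontier K.carrier ∩ U).Nonempty} :=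
  measurableSet_setOf_inter_nonempty_of_isOpen
    (fun _ hC => measurableSet_setOf_frontier_inter_nonempty_of_isClosed hC) hU

theorem measurableSet_setOf_frontier_subset {U : Set X} (hU : IsOpen U) :
    MeasurableSet {K : Hyper X | frontier K.carrier ⊆ U} := by
  simpa only [compl_ofPred, not_nonempty_iff_eq_empty, ← disjoint_iff_inter_eq_empty,
    ← subset_compl_iff_disjoint_right, compl_compl] using
    (measurableSet_setOf_frontier_inter_nonempty_of_isClosed hU.isClosed_compl).compl

end EMetric

def frontier {X : Type*} [TopologicalSpace X] [T2Space X] (K : Hyper X) : Hyper X :=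
  ⟨_root_.frontier K.carrier,
    K.isCompact_carrier.of_isClosed_subset isClosed_frontier
      K.isCompact_carrier.isClosed.frontier_subset⟩

theorem measurable_frontier {X : Type*} [EMetricSpace X] [SecondCountableTopology X] :
    Measurable (frontier : Hyper X → Hyper X) :=
  measurable_of_measurableSet_setOf (fun _ hU => measurableSet_setOf_frontier_subset hU)
    (fun _ hU => measurableSet_setOf_frontier_inter_nonempty hU)

end Hyper

theorem stmt_6 (X : Type*) [TopologicalSpace X] [PolishSpace X] :
    ∃ Φ : Hyper X → Hyper X,
      (∀ K : Hyper X, (Φ K).carrier = frontier K.carrier) ∧ Measurable Φ := by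
  let := TopologicalSpace.upgradeIsCompletelyMetrizable X
  exact ⟨Hyper.frontier, fun _ => rfl, Hyper.measurable_frontier⟩
end

section
/- Let n ∈ ℕ, let G ⊆ ℝⁿ be a nonempty open set, and let D₁, D₂ be countable dense subsets of G. Then there exists a homeomorphism h : ℝⁿ → ℝⁿ of ℝⁿ onto itself such that h(D₁) = D₂ and h(x) = x for every x ∈ ℝⁿ \ G. -/
/-!
Back and forth. Enumerate `D₁` and `D₂` and build homeomorphisms `H k` that are the identity off
`G` and match a finite subset of `D₁` into `D₂`, step `k` adding the `k`-th point of `D₁` to the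
domain and the `k`-th point of `D₂` to the range. A new point is matched by composing with a
homeomorphism supported in a small ball (a contracting perturbation of the identity); as the ball
is small for both `H k` and `(H k)⁻¹`, both sequences are uniformly Cauchy, and their limits are
mutually inverse homeomorphisms which agree with every `H k` on its finite domain.
-/

open Set Metric Filter Topology

theorem Function.Injective.mapsTo_of_forall_notMem_eq {α : Type*} {f : α → α} {s : Set α}
    (hf : Function.Injective f) (hfix : ∀ x ∉ s, f x = x) : MapsTo f s s := by
  intro x hx
  by_contra hfx
  exact hfx (by rwa [hf (hfix _ hfx)])

theorem dist_apply_lt_of_forall_notMem_eq {α X : Type*} [PseudoMetricSpace X] {g : α → α}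
    {s : Set α} {φ : α → X} {c : X} {δ : ℝ} (hg : Function.Injective g)
    (hfix : ∀ x ∉ s, g x = x) (hφ : MapsTo φ s (ball c (δ / 2))) (hδ : 0 < δ) (x : α) :
    dist (φ (g x)) (φ x) < δ := by
  by_cases hx : x ∈ s
  · calc dist (φ (g x)) (φ x) ≤ dist (φ (g x)) c + dist (φ x) c := dist_triangle_right _ _ _
      _ < δ / 2 + δ / 2 := add_lt_add (hφ (hg.mapsTo_of_forall_notMem_eq hfix hx)) (hφ hx)
      _ = δ := add_halves δ
  · rwa [hfix x hx, dist_self]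

theorem exists_tendstoUniformly_of_dist_le_geometric {α X : Type*} [PseudoMetricSpace X]
    [CompleteSpace X] {F : ℕ → α → X} {C r : ℝ} (hr₀ : 0 ≤ r) (hr : r < 1)
    (hF : ∀ k x, dist (F k x) (F (k + 1) x) ≤ C * r ^ k) : ∃ f, TendstoUniformly F f atTop := by
  choose f hf using fun x =>
    cauchySeq_tendsto_of_complete (cauchySeq_of_le_geometric r C hr (hF · x))
  refine ⟨f, Metric.tendstoUniformly_iff.2 fun ε hε => ?_⟩
  have hlim : Tendsto (fun k => C * r ^ k / (1 - r)) atTop (𝓝 0) := by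
    simpa using ((tendsto_pow_atTop_nhds_zero_of_lt_one hr₀ hr).const_mul C).div_const (1 - r)
  filter_upwards [hlim.eventually (gt_mem_nhds hε)] with k hk x
  rw [dist_comm]
  exact (dist_le_of_le_geometric_of_tendsto r C hr (hF · x) (hf x) k).trans_lt hk

theorem Homeomorph.exists_coe_eq_of_tendstoUniformly {X : Type*} [UniformSpace X] [T2Space X]
    {H : ℕ → X ≃ₜ X} {f g : X → X} (hf : TendstoUniformly (fun k => ⇑(H k)) f atTop)
    (hg : TendstoUniformly (fun k => ⇑(H k).symm) g atTop) : ∃ h : X ≃ₜ X, ⇑h = f := by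
  have hfc : Continuous f := hf.continuous (Frequently.of_forall fun k => (H k).continuous)
  have hgc : Continuous g := hg.continuous (Frequently.of_forall fun k => (H k).symm.continuous)
  refine ⟨⟨⟨f, g, fun x => ?_, fun y => ?_⟩, hfc, hgc⟩, rfl⟩
  · refine tendsto_nhds_unique (hg.tendsto_comp hgc.continuousAt (hf.tendsto_at x)) ?_
    simp only [Homeomorph.symm_apply_apply, tendsto_const_nhds]
  · refine tendsto_nhds_unique (hf.tendsto_comp hfc.continuousAt (hg.tendsto_at y)) ?_
    simp only [Homeomorph.apply_symm_apply, tendsto_const_nhds]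

section Matching

variable {X : Type*}

structure FiniteMatching [TopologicalSpace X] (G D₁ D₂ : Set X) (H : X ≃ₜ X) (A : Set X) :
    Prop where
  apply_eq_of_notMem : ∀ x ∉ G, H x = x
  finite : A.Finite
  subset : A ⊆ D₁
  image_subset : H '' A ⊆ D₂

namespace FiniteMatching

variable [TopologicalSpace X] {G D₁ D₂ A : Set X} {H : X ≃ₜ X}

theorem mapsTo (hM : FiniteMatching G D₁ D₂ H A) : MapsTo H G G :=
  H.injective.mapsTo_of_forall_notMem_eq hM.apply_eq_of_notMem

theorem symm (hM : FiniteMatching G D₁ D₂ H A) : FiniteMatching G D₂ D₁ H.symm (H '' A) where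
  apply_eq_of_notMem x hx := H.symm_apply_eq.2 (hM.apply_eq_of_notMem x hx).symm
  finite := hM.finite.image H
  subset := hM.image_subset
  image_subset := by rw [H.image_symm, H.preimage_image]; exact hM.subset

end FiniteMatching

structure IsCloseExtension [PseudoMetricSpace X] (ε : ℝ) (H : X ≃ₜ X) (A : Set X)
    (H' : X ≃ₜ X) (A' : Set X) : Prop where
  subset : A ⊆ A'
  eqOn : EqOn H' H A
  dist_apply_lt : ∀ x, dist (H' x) (H x) < ε
  dist_symm_apply_lt : ∀ y, dist (H'.symm y) (H.symm y) < ε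

namespace IsCloseExtension

variable [PseudoMetricSpace X] {ε δ : ℝ} {H H' H'' : X ≃ₜ X} {A A' A'' : Set X}

theorem symm (hE : IsCloseExtension ε H A H' A') :
    IsCloseExtension ε H.symm (H '' A) H'.symm (H' '' A') where
  subset := by
    rintro _ ⟨x, hx, rfl⟩
    exact ⟨x, hE.subset hx, hE.eqOn hx⟩
  eqOn := by
    rintro _ ⟨x, hx, rfl⟩
    rw [H.symm_apply_apply, ← hE.eqOn hx, H'.symm_apply_apply]
  dist_apply_lt := hE.dist_symm_apply_lt
  dist_symm_apply_lt := by simpa using hE.dist_apply_lt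

theorem trans (hE : IsCloseExtension ε H A H' A') (hE' : IsCloseExtension δ H' A' H'' A'') :
    IsCloseExtension (ε + δ) H A H'' A'' where
  subset := hE.subset.trans hE'.subset
  eqOn := (hE'.eqOn.mono hE.subset).trans hE.eqOn
  dist_apply_lt x := by
    linarith [dist_triangle (H'' x) (H' x) (H x), hE.dist_apply_lt x, hE'.dist_apply_lt x]
  dist_symm_apply_lt y := by
    linarith [dist_triangle (H''.symm y) (H'.symm y) (H.symm y), hE.dist_symm_apply_lt y,
      hE'.dist_symm_apply_lt y]

end IsCloseExtension

theorem exists_homeomorph_tendsto_of_isCloseExtension [MetricSpace X] [CompleteSpace X]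
    {H : ℕ → X ≃ₜ X} {A : ℕ → Set X} {r : ℝ} (hr₀ : 0 ≤ r) (hr : r < 1)
    (hE : ∀ k, IsCloseExtension (r ^ k) (H k) (A k) (H (k + 1)) (A (k + 1))) :
    ∃ h : X ≃ₜ X, (∀ x, Tendsto (H · x) atTop (𝓝 (h x))) ∧ ∀ k, EqOn h (H k) (A k) := by
  obtain ⟨f, hf⟩ := exists_tendstoUniformly_of_dist_le_geometric (F := fun k => ⇑(H k)) (C := 1)
      hr₀ hr fun k x => by
    rw [one_mul, dist_comm]; exact ((hE k).dist_apply_lt x).le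
  obtain ⟨g, hg⟩ := exists_tendstoUniformly_of_dist_le_geometric
      (F := fun k => ⇑(H k).symm) (C := 1) hr₀ hr fun k y => by
    rw [one_mul, dist_comm]; exact ((hE k).dist_symm_apply_lt y).le
  obtain ⟨h, rfl⟩ := Homeomorph.exists_coe_eq_of_tendstoUniformly hf hg
  refine ⟨h, hf.tendsto_at, fun k x hx => tendsto_nhds_unique (hf.tendsto_at x) ?_⟩
  have hstable : ∀ m ≥ k, x ∈ A m ∧ H m x = H k x := fun m hm => by
    induction m, hm using Nat.le_induction with
    | base => exact ⟨hx, rfl⟩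
    | succ m _ ih => exact ⟨(hE m).subset ih.1, ((hE m).eqOn ih.1).trans ih.2⟩
  exact tendsto_const_nhds.congr' (eventually_atTop.2 ⟨k, fun m hm => (hstable m hm).2.symm⟩)

end Matching

section NormedSpace

variable {E : Type*} [NormedAddCommGroup E] [NormedSpace ℝ E] [CompleteSpace E]
  {G D₁ D₂ A : Set E} {H : E ≃ₜ E} {ε : ℝ}

theorem exists_homeomorph_add_of_lipschitzWith {u : E → E} {K : NNReal}
    (hu : LipschitzWith K u) (hK : K < 1) : ∃ h : E ≃ₜ E, ∀ x, h x = x + u x := by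
  have happrox : ApproximatesLinearOn (fun x => x + u x)
      ((ContinuousLinearEquiv.refl ℝ E : E ≃L[ℝ] E) : E →L[ℝ] E) univ K := by
    refine LipschitzOnWith.approximatesLinearOn ?_
    convert hu.lipschitzOnWith (s := univ) using 1
    ext x
    simp
  have hK' : Subsingleton E ∨ K < ‖(((ContinuousLinearEquiv.refl ℝ E).symm : E ≃L[ℝ] E) :
      E →L[ℝ] E)‖₊⁻¹ := by
    rcases subsingleton_or_nontrivial E with hE | hE
    · exact Or.inl hE
    · right
      simpa [ContinuousLinearEquiv.coe_refl, ContinuousLinearMap.nnnorm_id] using hK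
  exact ⟨happrox.toHomeomorph _ hK', fun _ => rfl⟩

/-- The bump `x ↦ x + max (1 - dist x a / r) 0 • (b - a)` perturbs the identity by a map with
Lipschitz constant `dist b a / r < 1`, so it is a homeomorphism; it sends `a` to `b` and is the
identity off `ball a r`. -/
theorem exists_homeomorph_apply_eq_of_dist_lt (a b : E) {r : ℝ} (hab : dist b a < r) :
    ∃ g : E ≃ₜ E, g a = b ∧ ∀ x ∉ ball a r, g x = x := by
  have hr : 0 < r := dist_nonneg.trans_lt hab
  set φ : E → ℝ := fun x => max (1 - dist x a / r) 0
  have hφ : ∀ x y, |φ x - φ y| ≤ dist x y / r := fun x y =>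
    calc |φ x - φ y| ≤ |(1 - dist x a / r) - (1 - dist y a / r)| := abs_max_sub_max_le_abs _ _ _
      _ = |dist y a - dist x a| / r := by
        rw [show 1 - dist x a / r - (1 - dist y a / r) = (dist y a - dist x a) / r by ring,
          abs_div, abs_of_pos hr]
      _ ≤ dist x y / r := by gcongr; rw [dist_comm x y]; exact abs_dist_sub_le _ _ _
  have hu : LipschitzWith (⟨dist b a / r, by positivity⟩ : NNReal) (fun x => φ x • (b - a)) := by
    refine LipschitzWith.of_dist_le_mul fun x y => ?_
    rw [dist_eq_norm, ← sub_smul, norm_smul, Real.norm_eq_abs, ← dist_eq_norm]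
    calc |φ x - φ y| * dist b a ≤ dist x y / r * dist b a := by gcongr; exact hφ x y
      _ = dist b a / r * dist x y := by ring
  obtain ⟨g, hg⟩ := exists_homeomorph_add_of_lipschitzWith hu
    (NNReal.coe_lt_coe.1 ((div_lt_one hr).2 hab))
  refine ⟨g, by simp [hg, φ], fun x hx => ?_⟩
  have hφx : φ x = 0 :=
    max_eq_right (by rw [sub_nonpos, one_le_div hr]; simpa using hx)
  simp [hg, hφx]

/-- Compose `H` with a homeomorphism supported in a small ball around `H p` that moves `H p` to a
nearby point of `D₂`; the ball avoids `H '' A`, lies in `G`, and is small for `H⁻¹` too. -/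
theorem FiniteMatching.exists_insert (hG : IsOpen G) (hd₂ : G ⊆ closure D₂)
    (hM : FiniteMatching G D₁ D₂ H A) {p : E} (hp : p ∈ D₁) (hpG : p ∈ G) (hε : 0 < ε) :
    ∃ H', FiniteMatching G D₁ D₂ H' (insert p A) ∧ IsCloseExtension ε H A H' (insert p A) := by
  by_cases hpA : p ∈ A
  · rw [insert_eq_of_mem hpA]
    exact ⟨H, hM, ⟨subset_rfl, eqOn_refl _ _, by simpa, by simpa⟩⟩
  set q := H p
  have hqG : q ∈ G := hM.mapsTo hpG
  have hqA : q ∉ H '' A := fun ⟨x, hx, hxp⟩ => hpA (H.injective hxp ▸ hx)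
  have hU : IsOpen (G ∩ (H '' A)ᶜ ∩ H.symm ⁻¹' ball p (ε / 2) ∩ ball q (ε / 2)) :=
    ((hG.inter (hM.finite.image H).isClosed.isOpen_compl).inter
      (isOpen_ball.preimage H.symm.continuous)).inter isOpen_ball
  obtain ⟨r, hr, hball⟩ := Metric.isOpen_iff.1 hU q
    ⟨⟨⟨hqG, hqA⟩, by simp [q, half_pos hε]⟩, mem_ball_self (half_pos hε)⟩
  obtain ⟨q', hq'D, hqq'⟩ := Metric.mem_closure_iff.1 (hd₂ hqG) r hr
  obtain ⟨g, hgq, hg⟩ := exists_homeomorph_apply_eq_of_dist_lt q q' (by rwa [dist_comm])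
  have hgA : ∀ x ∈ A, g (H x) = H x := fun x hx => hg _ fun h => (hball h).1.1.2 ⟨x, hx, rfl⟩
  refine ⟨H.trans g, ⟨fun x hx => ?_, hM.finite.insert p, insert_subset hp hM.subset, ?_⟩,
    ⟨subset_insert _ _, hgA, fun x => ?_, fun y => ?_⟩⟩
  · rw [H.trans_apply, hM.apply_eq_of_notMem x hx]
    exact hg x fun h => hx (hball h).1.1.1
  · rintro _ ⟨x, rfl | hx, rfl⟩
    · rw [H.trans_apply, hgq]
      exact hq'D
    · rw [H.trans_apply, hgA x hx]
      exact hM.image_subset ⟨x, hx, rfl⟩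
  · exact dist_apply_lt_of_forall_notMem_eq g.injective hg (φ := id) (fun z hz => (hball hz).2)
      hε (H x)
  · exact dist_apply_lt_of_forall_notMem_eq g.symm.injective
      (fun z hz => g.symm_apply_eq.2 (hg z hz).symm) (fun z hz => (hball hz).1.2) hε y

theorem FiniteMatching.exists_mem_image (hG : IsOpen G) (hd₁ : G ⊆ closure D₁)
    (hM : FiniteMatching G D₁ D₂ H A) {q : E} (hq : q ∈ D₂) (hqG : q ∈ G) (hε : 0 < ε) :
    ∃ H' A', FiniteMatching G D₁ D₂ H' A' ∧ IsCloseExtension ε H A H' A' ∧ q ∈ H' '' A' := by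
  obtain ⟨K, hK, hE⟩ := hM.symm.exists_insert hG hd₁ hq hqG hε
  refine ⟨K.symm, K '' insert q (H '' A), hK.symm, ?_, ⟨K q, mem_image_of_mem K (mem_insert _ _),
    K.symm_apply_apply q⟩⟩
  simpa [H.image_symm, H.preimage_image] using hE.symm

theorem FiniteMatching.exists_extend (hG : IsOpen G) (h₁ : D₁ ⊆ G) (h₂ : D₂ ⊆ G)
    (hd₁ : G ⊆ closure D₁) (hd₂ : G ⊆ closure D₂) (hM : FiniteMatching G D₁ D₂ H A)
    {p q : E} (hp : p ∈ D₁) (hq : q ∈ D₂) (hε : 0 < ε) :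
    ∃ H' A', FiniteMatching G D₁ D₂ H' A' ∧ IsCloseExtension ε H A H' A' ∧ p ∈ A' ∧
      q ∈ H' '' A' := by
  obtain ⟨H₁, hM₁, hE₁⟩ := hM.exists_insert hG hd₂ hp (h₁ hp) (half_pos hε)
  obtain ⟨H₂, A₂, hM₂, hE₂, hq₂⟩ := hM₁.exists_mem_image hG hd₁ hq (h₂ hq) (half_pos hε)
  exact ⟨H₂, A₂, hM₂, add_halves ε ▸ hE₁.trans hE₂, hE₂.subset (mem_insert _ _), hq₂⟩

/-- Step `k` matches the `k`-th points of enumerations of `D₁` and `D₂`. -/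
theorem exists_seq_finiteMatching (hG : IsOpen G) (h₁ : D₁ ⊆ G) (h₂ : D₂ ⊆ G)
    (hd₁ : G ⊆ closure D₁) (hd₂ : G ⊆ closure D₂) (hc₁ : D₁.Countable) (hc₂ : D₂.Countable)
    (hne₁ : D₁.Nonempty) (hne₂ : D₂.Nonempty) :
    ∃ (H : ℕ → E ≃ₜ E) (A : ℕ → Set E), (∀ k, FiniteMatching G D₁ D₂ (H k) (A k)) ∧
      (∀ k, IsCloseExtension ((1 / 2) ^ k) (H k) (A k) (H (k + 1)) (A (k + 1))) ∧
      (∀ x ∈ D₁, ∃ k, x ∈ A k) ∧ ∀ y ∈ D₂, ∃ k, y ∈ H k '' A k := by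
  obtain ⟨e₁, rfl⟩ := hc₁.exists_eq_range hne₁
  obtain ⟨e₂, rfl⟩ := hc₂.exists_eq_range hne₂
  let State := {s : (E ≃ₜ E) × Set E // FiniteMatching G (range e₁) (range e₂) s.1 s.2}
  have step (k : ℕ) (s : State) : ∃ t : State,
      IsCloseExtension ((1 / 2) ^ k) s.1.1 s.1.2 t.1.1 t.1.2 ∧ e₁ k ∈ t.1.2 ∧
        e₂ k ∈ t.1.1 '' t.1.2 := by
    obtain ⟨H', A', hM', hE, hp, hq⟩ := s.2.exists_extend (ε := (1 / 2) ^ k) hG h₁ h₂ hd₁ hd₂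
      (mem_range_self k) (mem_range_self k) (by positivity)
    exact ⟨⟨(H', A'), hM'⟩, hE, hp, hq⟩
  choose next hnext using step
  let s₀ : State := ⟨(Homeomorph.refl E, ∅), fun _ _ => rfl, finite_empty, empty_subset _,
    by simp⟩
  let s (k : ℕ) : State := Nat.rec s₀ next k
  refine ⟨fun k => (s k).1.1, fun k => (s k).1.2, fun k => (s k).2, fun k => (hnext k (s k)).1,
    ?_, ?_⟩
  · rintro _ ⟨k, rfl⟩
    exact ⟨k + 1, (hnext k (s k)).2.1⟩
  · rintro _ ⟨k, rfl⟩
    exact ⟨k + 1, (hnext k (s k)).2.2⟩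

theorem exists_homeomorph_image_eq_of_countable_dense (hG : IsOpen G) (hGne : G.Nonempty)
    (hc₁ : D₁.Countable) (hc₂ : D₂.Countable) (h₁ : D₁ ⊆ G) (h₂ : D₂ ⊆ G)
    (hd₁ : G ⊆ closure D₁) (hd₂ : G ⊆ closure D₂) :
    ∃ h : E ≃ₜ E, h '' D₁ = D₂ ∧ ∀ x ∉ G, h x = x := by
  obtain ⟨H, A, hM, hE, hcov₁, hcov₂⟩ := exists_seq_finiteMatching hG h₁ h₂ hd₁ hd₂ hc₁ hc₂
    (hGne.mono hd₁).of_closure (hGne.mono hd₂).of_closure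
  obtain ⟨h, hlim, heq⟩ := exists_homeomorph_tendsto_of_isCloseExtension (by norm_num)
    (by norm_num) hE
  refine ⟨h, Subset.antisymm ?_ fun y hy => ?_, fun x hx => ?_⟩
  · rintro _ ⟨x, hx, rfl⟩
    obtain ⟨k, hk⟩ := hcov₁ x hx
    rw [heq k hk]
    exact (hM k).image_subset (mem_image_of_mem _ hk)
  · obtain ⟨k, x, hx, rfl⟩ := hcov₂ y hy
    exact ⟨x, (hM k).subset hx, heq k hx⟩
  · exact tendsto_nhds_unique (hlim x)
      (tendsto_const_nhds.congr fun k => ((hM k).apply_eq_of_notMem x hx).symm)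

end NormedSpace

theorem stmt_9 (n : ℕ) (G : Set (EuclideanSpace ℝ (Fin n)))
    (hGopen : IsOpen G) (hGne : G.Nonempty)
    (D₁ D₂ : Set (EuclideanSpace ℝ (Fin n)))
    (hD₁ctble : D₁.Countable) (hD₂ctble : D₂.Countable)
    (hD₁sub : D₁ ⊆ G) (hD₂sub : D₂ ⊆ G)
    (hD₁dense : G ⊆ closure D₁) (hD₂dense : G ⊆ closure D₂) :
    ∃ h : EuclideanSpace ℝ (Fin n) ≃ₜ EuclideanSpace ℝ (Fin n),
      ⇑h '' D₁ = D₂ ∧ ∀ x ∉ G, h x = x :=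
  exists_homeomorph_image_eq_of_countable_dense hGopen hGne hD₁ctble hD₂ctble hD₁sub hD₂sub
    hD₁dense hD₂dense
end

section
/- Let P be a connected topological space and let A ⊆ P be an open set whose frontier (in P) is connected. Then P \ A is connected. -/
open Set

/-!
Since `A` is open, its frontier lies in `Aᶜ`. Split `Aᶜ` by two disjoint closed sets `u`, `v`;
the connected frontier lies in one of them, say `u`. Then `A ∪ u` is closed (it contains the
frontier of `A`) and open (its complement is the closed set `Aᶜ ∩ v`), so by connectedness of the
space it is everything, i.e. `Aᶜ ⊆ u`.
-/

section

variable {X : Type*} [TopologicalSpace X] {A u v : Set X}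

theorem IsClosed.union_of_frontier_subset (hu : IsClosed u) (hfr : frontier A ⊆ u) :
    IsClosed (A ∪ u) := by
  refine isClosed_of_closure_subset ?_
  rw [closure_union, hu.closure_eq, closure_eq_self_union_frontier]
  exact union_subset (union_subset_union_right A hfr) subset_union_right

theorem IsOpen.isClopen_union_of_frontier_subset (hA : IsOpen A) (hu : IsClosed u)
    (hv : IsClosed v) (hcover : Aᶜ ⊆ u ∪ v) (huv : Disjoint u v) (hfr : frontier A ⊆ u) :
    IsClopen (A ∪ u) := by
  have hcompl : (A ∪ u)ᶜ = Aᶜ ∩ v := by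
    ext x
    simp only [mem_compl_iff, mem_union, mem_inter_iff, not_or]
    exact ⟨fun ⟨hxA, hxu⟩ => ⟨hxA, (hcover hxA).resolve_left hxu⟩,
      fun ⟨hxA, hxv⟩ => ⟨hxA, fun hxu => huv.ne_of_mem hxu hxv rfl⟩⟩
  refine ⟨hu.union_of_frontier_subset hfr, ?_⟩
  rw [← isClosed_compl_iff, hcompl]
  exact hA.isClosed_compl.inter hv

theorem IsOpen.compl_subset_of_frontier_subset [PreconnectedSpace X] (hA : IsOpen A)
    (hu : IsClosed u) (hv : IsClosed v) (hcover : Aᶜ ⊆ u ∪ v) (huv : Disjoint u v)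
    (hfr : frontier A ⊆ u) (hne : (frontier A).Nonempty) : Aᶜ ⊆ u := by
  obtain ⟨x, hx⟩ := hne
  have hall : univ ⊆ A ∪ u := isPreconnected_univ.subset_isClopen
    (hA.isClopen_union_of_frontier_subset hu hv hcover huv hfr) ⟨x, trivial, Or.inr (hfr hx)⟩
  exact fun y hy => (hall trivial).resolve_left hy
end

theorem stmt_18 {P : Type*} [TopologicalSpace P] [ConnectedSpace P]
    (A : Set P) (hA : IsOpen A) (hfr : IsConnected (frontier A)) :
    IsConnected Aᶜ := by
  have hfrc : frontier A ⊆ Aᶜ := by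
    rw [hA.frontier_eq]
    exact sdiff_subset_compl _ _
  refine ⟨hfr.nonempty.mono hfrc, ?_⟩
  rw [isPreconnected_iff_subset_of_fully_disjoint_closed hA.isClosed_compl]
  intro u v hu hv hcover huv
  rcases (isPreconnected_iff_subset_of_fully_disjoint_closed isClosed_frontier).mp
      hfr.isPreconnected u v hu hv (hfrc.trans hcover) huv with h | h
  · exact Or.inl (hA.compl_subset_of_frontier_subset hu hv hcover huv h hfr.nonempty)
  · exact Or.inr (hA.compl_subset_of_frontier_subset hv hu (union_comm u v ▸ hcover)
      huv.symm h hfr.nonempty)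
end

section
/- Let X be a compact metric space, let Y ⊆ X be a subset which, as a subspace, is a locally connected continuum, and let 𝒜 be a family of subsets of X such that: every A ∈ 𝒜 intersects Y; every A ∈ 𝒜 is, as a subspace, a locally connected continuum; for every ε > 0 the set {A ∈ 𝒜 : diam(A) ≥ ε} is finite; and Y ∪ ⋃𝒜 = X. Then X is a locally connected continuum. -/
/-!
`X` is connected because it is obtained from the connected set `Y` by attaching connected sets
that meet it.

Local connectedness goes through the criterion that a compact metric space is locally connected as
soon as, for every `ε > 0`, it is a finite union of connected sets of diameter at most `ε`: the
closures of those pieces whose closure contains a given point `x` form a connected neighbourhood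
of `x` of radius at most `ε`. Compact locally connected sets such as `Y` and each `A ∈ 𝒜` have such covers.
For `X`, take an `ε`-cover of `Y` in which every piece `C` is enlarged by the members of `𝒜` of
diameter `< ε` that meet it (still connected, and of diameter at most `3ε`), together with
`ε`-covers of the finitely many members of `𝒜` of diameter `≥ ε`.
-/

open Set Metric

theorem IsPreconnected.union_sUnion {X : Type*} [TopologicalSpace X] {s : Set X}
    {T : Set (Set X)} (hs : IsPreconnected s) (hT : ∀ t ∈ T, IsPreconnected t ∧ (t ∩ s).Nonempty) :
    IsPreconnected (s ∪ ⋃₀ T) := by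
  rcases s.eq_empty_or_nonempty with rfl | ⟨x, hx⟩
  · have : T = ∅ := eq_empty_of_forall_notMem fun t ht => by simpa using (hT t ht).2
    simpa [this] using hs
  refine isPreconnected_of_forall x fun y hy => ?_
  rcases hy with hy | ⟨t, ht, hyt⟩
  · exact ⟨s, subset_union_left, hx, hy, hs⟩
  · obtain ⟨htp, z, hzt, hzs⟩ := hT t ht
    exact ⟨s ∪ t, union_subset_union_right s (subset_sUnion_of_mem ht), Or.inl hx, Or.inr hyt,
      IsPreconnected.union z hzs hzt hs htp⟩

section PseudoMetric

variable {X : Type*} [PseudoMetricSpace X]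

theorem Metric.diam_union_sUnion_le [BoundedSpace X] {s : Set X} {T : Set (Set X)} {δ : ℝ}
    (hδ : 0 ≤ δ) (hT : ∀ t ∈ T, (t ∩ s).Nonempty ∧ diam t ≤ δ) :
    diam (s ∪ ⋃₀ T) ≤ diam s + 2 * δ := by
  have hnear : ∀ p ∈ s ∪ ⋃₀ T, ∃ q ∈ s, dist p q ≤ δ := by
    rintro p (hp | ⟨t, ht, hpt⟩)
    · exact ⟨p, hp, by simpa using hδ⟩
    · obtain ⟨⟨q, hqt, hqs⟩, hdiam⟩ := hT t ht
      exact ⟨q, hqs, (dist_le_diam_of_mem (.all _) hpt hqt).trans hdiam⟩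
  refine diam_le_of_forall_dist_le (by positivity) fun p hp p' hp' => ?_
  obtain ⟨q, hq, hpq⟩ := hnear p hp
  obtain ⟨q', hq', hpq'⟩ := hnear p' hp'
  calc dist p p' ≤ dist p q + dist q q' + dist q' p' := dist_triangle4 p q q' p'
    _ ≤ δ + diam s + δ := by
      gcongr
      · exact dist_le_diam_of_mem (.all _) hq hq'
      · rwa [dist_comm]
    _ = diam s + 2 * δ := by ring

def HasFinitePreconnectedCover (K : Set X) (ε : ℝ) : Prop :=
  ∃ 𝒞 : Set (Set X), 𝒞.Finite ∧ (∀ C ∈ 𝒞, IsPreconnected C ∧ diam C ≤ ε) ∧ K ⊆ ⋃₀ 𝒞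

theorem hasFinitePreconnectedCover_univ [CompactSpace X] [LocallyConnectedSpace X] {ε : ℝ}
    (hε : 0 < ε) : HasFinitePreconnectedCover (univ : Set X) ε := by
  obtain ⟨t, ht⟩ := CompactSpace.elim_nhds_subcover
    (fun x : X => connectedComponentIn (ball x (ε / 2)) x)
    fun x => connectedComponentIn_mem_nhds (ball_mem_nhds x (half_pos hε))
  refine ⟨(fun x => connectedComponentIn (ball x (ε / 2)) x) '' t, t.finite_toSet.image _, ?_, ?_⟩
  · rintro _ ⟨x, -, rfl⟩
    refine ⟨isPreconnected_connectedComponentIn, ?_⟩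
    calc diam (connectedComponentIn (ball x (ε / 2)) x)
        ≤ diam (ball x (ε / 2)) := diam_mono (connectedComponentIn_subset _ _) isBounded_ball
      _ ≤ 2 * (ε / 2) := diam_ball (half_pos hε).le
      _ = ε := by ring
  · rw [sUnion_image, Finset.set_biUnion_coe, ht]
    exact subset_univ _

theorem IsCompact.hasFinitePreconnectedCover {K : Set X} (hK : IsCompact K)
    [LocallyConnectedSpace K] {ε : ℝ} (hε : 0 < ε) : HasFinitePreconnectedCover K ε := by
  have := isCompact_iff_compactSpace.mp hK
  obtain ⟨𝒞, hfin, h𝒞, hcov⟩ := hasFinitePreconnectedCover_univ (X := K) hε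
  refine ⟨Set.image Subtype.val '' 𝒞, hfin.image _, ?_, fun x hx => ?_⟩
  · rintro _ ⟨C, hC, rfl⟩
    exact ⟨(h𝒞 C hC).1.image _ continuous_subtype_val.continuousOn,
      (isometry_subtype_coe.diam_image C).trans_le (h𝒞 C hC).2⟩
  · obtain ⟨C, hC, hxC⟩ := hcov (mem_univ ⟨x, hx⟩)
    exact ⟨_, ⟨C, hC, rfl⟩, ⟨_, hxC, rfl⟩⟩

theorem HasFinitePreconnectedCover.union_sUnion [BoundedSpace X] {Y : Set X} {𝒜 : Set (Set X)}
    {ε : ℝ} (hε : 0 ≤ ε) (hY : HasFinitePreconnectedCover Y ε)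
    (h𝒜 : ∀ A ∈ 𝒜, IsPreconnected A ∧ (A ∩ Y).Nonempty)
    (hlarge : ∀ A ∈ 𝒜, ε ≤ diam A → HasFinitePreconnectedCover A ε)
    (hfin : {A ∈ 𝒜 | ε ≤ diam A}.Finite) :
    HasFinitePreconnectedCover (Y ∪ ⋃₀ 𝒜) (3 * ε) := by
  obtain ⟨𝒞, h𝒞fin, h𝒞, hY⟩ := hY
  choose! 𝒟 h𝒟fin h𝒟 h𝒟cov using hlarge
  let attachSmall (C : Set X) : Set X := C ∪ ⋃₀ {A ∈ 𝒜 | diam A < ε ∧ (A ∩ C).Nonempty}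
  refine ⟨attachSmall '' 𝒞 ∪ ⋃ A ∈ {A ∈ 𝒜 | ε ≤ diam A}, 𝒟 A,
    (h𝒞fin.image _).union (hfin.biUnion fun A hA => h𝒟fin A hA.1 hA.2), ?_, ?_⟩
  · rintro _ (⟨C, hC, rfl⟩ | hD)
    · refine ⟨(h𝒞 C hC).1.union_sUnion fun A hA => ⟨(h𝒜 A hA.1).1, hA.2.2⟩, ?_⟩
      calc diam (attachSmall C) ≤ diam C + 2 * ε :=
            diam_union_sUnion_le hε fun A hA => ⟨hA.2.2, hA.2.1.le⟩
        _ ≤ 3 * ε := by linarith [(h𝒞 C hC).2]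
    · obtain ⟨A, hA, hD⟩ := mem_iUnion₂.mp hD
      obtain ⟨hDpre, hDdiam⟩ := h𝒟 A hA.1 hA.2 _ hD
      exact ⟨hDpre, by linarith⟩
  · rintro x (hxY | ⟨A, hA, hxA⟩)
    · obtain ⟨C, hC, hxC⟩ := hY hxY
      exact ⟨_, Or.inl ⟨C, hC, rfl⟩, Or.inl hxC⟩
    · rcases le_or_gt ε (diam A) with hbig | hsmall
      · obtain ⟨D, hD, hxD⟩ := h𝒟cov A hA hbig hxA
        exact ⟨D, Or.inr (mem_biUnion ⟨hA, hbig⟩ hD), hxD⟩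
      · obtain ⟨q, hqA, hqY⟩ := (h𝒜 A hA).2
        obtain ⟨C, hC, hqC⟩ := hY hqY
        exact ⟨_, Or.inl ⟨C, hC, rfl⟩, Or.inr ⟨A, ⟨hA, hsmall, q, hqA, hqC⟩, hxA⟩⟩

theorem locallyConnectedSpace_of_hasFinitePreconnectedCover [BoundedSpace X]
    (h : ∀ ε > 0, HasFinitePreconnectedCover (univ : Set X) ε) : LocallyConnectedSpace X := by
  rw [locallyConnectedSpace_iff_connected_subsets]
  intro x U hU
  obtain ⟨ε, hε, hball⟩ := nhds_basis_closedBall.mem_iff.mp hU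
  obtain ⟨𝒞, hfin, h𝒞, hcov⟩ := h ε hε
  refine ⟨⋃₀ (closure '' {C ∈ 𝒞 | x ∈ closure C}), ?_, ?_, ?_⟩
  · have hfar : IsClosed (⋃ C ∈ {C ∈ 𝒞 | x ∉ closure C}, closure C) :=
      (hfin.subset (sep_subset _ _)).isClosed_biUnion fun _ _ => isClosed_closure
    refine Filter.mem_of_superset (hfar.isOpen_compl.mem_nhds ?_) fun y hy => ?_
    · simp only [mem_compl_iff, mem_iUnion₂, not_exists]
      exact fun C hC hxC => hC.2 hxC
    · obtain ⟨C, hC, hyC⟩ := hcov (mem_univ y)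
      by_cases hxC : x ∈ closure C
      · exact ⟨_, ⟨C, ⟨hC, hxC⟩, rfl⟩, subset_closure hyC⟩
      · exact (hy (mem_biUnion ⟨hC, hxC⟩ (subset_closure hyC))).elim
  · refine isPreconnected_sUnion x _ (by rintro _ ⟨C, hC, rfl⟩; exact hC.2) ?_
    rintro _ ⟨C, hC, rfl⟩
    exact (h𝒞 C hC.1).1.closure
  · refine subset_trans ?_ hball
    rintro y ⟨_, ⟨C, hC, rfl⟩, hyC⟩
    calc dist y x ≤ diam (closure C) := dist_le_diam_of_mem (.all _) hyC hC.2
      _ = diam C := diam_closure C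
      _ ≤ ε := (h𝒞 C hC.1).2

end PseudoMetric

theorem stmt_19 {X : Type*} [MetricSpace X] [CompactSpace X]
    (Y : Set X) (hYc : IsCompact Y) (hYconn : IsConnected Y)
    (hYlc : LocallyConnectedSpace ↥Y)
    (𝒜 : Set (Set X))
    (hmeet : ∀ A ∈ 𝒜, (A ∩ Y).Nonempty)
    (hlcc : ∀ A ∈ 𝒜, IsCompact A ∧ IsConnected A ∧ LocallyConnectedSpace ↥A)
    (hfin : ∀ ε : ℝ, 0 < ε → {A ∈ 𝒜 | ε ≤ Metric.diam A}.Finite)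
    (hcover : Y ∪ ⋃₀ 𝒜 = univ) :
    ConnectedSpace X ∧ LocallyConnectedSpace X := by
  have h𝒜 : ∀ A ∈ 𝒜, IsPreconnected A ∧ (A ∩ Y).Nonempty :=
    fun A hA => ⟨(hlcc A hA).2.1.isPreconnected, hmeet A hA⟩
  have hpre : IsPreconnected (univ : Set X) := hcover ▸ hYconn.isPreconnected.union_sUnion h𝒜
  refine ⟨connectedSpace_iff_univ.mpr ⟨hYconn.nonempty.mono (subset_univ Y), hpre⟩,
    locallyConnectedSpace_of_hasFinitePreconnectedCover fun ε hε => ?_⟩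
  have hε3 : 0 < ε / 3 := by positivity
  have hlarge : ∀ A ∈ 𝒜, ε / 3 ≤ diam A → HasFinitePreconnectedCover A (ε / 3) := fun A hA _ =>
    have := (hlcc A hA).2.2
    (hlcc A hA).1.hasFinitePreconnectedCover hε3
  have := hYlc
  rw [← hcover, show ε = 3 * (ε / 3) by ring]
  exact (hYc.hasFinitePreconnectedCover hε3).union_sUnion hε3.le h𝒜 hlarge (hfin _ hε3)
end
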